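/- arXiv:2506.14994 — 4 statements merged into one kernel-verified Lean document; each statement's English description precedes it below -/
import Mathlib

section
/- (Kabsch optimality) Let A and B be real N×n matrices and suppose H = BAᵀ has singular value decomposition H = UΣVᵀ with U, V ∈ O(N) and Σ diagonal with nonnegative entries. Then the orthogonal matrix R₀ = UVᵀ minimizes the least-squares alignment cost: for every R ∈ O(N), ‖B − R₀·A‖² ≤ ‖B − R·A‖², where ‖·‖ is the Frobenius norm. -/
open Matrix

lemma diag_le_one_of_orth {N : ℕ} (M : Matrix (Fin N) (Fin N) ℝ)
    (hM : Mᵀ * M = 1) (i : Fin N) : M i i ≤ 1 := by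
  have h : (Mᵀ * M) i i = 1 := by rw [hM]; simp
  have h2 : ∑ j, M j i * M j i = 1 := by
    simpa [Matrix.mul_apply, Matrix.transpose_apply] using h
  have h3 : M i i * M i i ≤ 1 := by
    rw [← h2]
    exact Finset.single_le_sum (f := fun j => M j i * M j i)
      (fun j _ => mul_self_nonneg _) (Finset.mem_univ i)
  nlinarith

lemma trace_diag_mul {N : ℕ} (d : Fin N → ℝ) (M : Matrix (Fin N) (Fin N) ℝ) :
    (Matrix.diagonal d * M).trace = ∑ i, d i * M i i := by
  simp [Matrix.trace, Matrix.diag, Matrix.mul_apply, Matrix.diagonal]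

/-- (Kabsch optimality) If `B Aᵀ = U Σ Vᵀ` is a singular value decomposition with
`U, V ∈ O(N)` and `Σ` diagonal with nonnegative entries, then `R₀ = U Vᵀ` minimizes the
least-squares alignment cost `‖B − R·A‖²` (squared Frobenius norm) over all `R ∈ O(N)`. -/
theorem kabsch_optimality (N n : ℕ) (A B : Matrix (Fin N) (Fin n) ℝ)
    (U V : Matrix (Fin N) (Fin N) ℝ) (σ : Fin N → ℝ)
    (hU : Uᵀ * U = 1) (hV : Vᵀ * V = 1) (hσ : ∀ i, 0 ≤ σ i)
    (hsvd : B * Aᵀ = U * Matrix.diagonal σ * Vᵀ) :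
    ∀ R : Matrix (Fin N) (Fin N) ℝ, Rᵀ * R = 1 →
      ((B - (U * Vᵀ) * A)ᵀ * (B - (U * Vᵀ) * A)).trace
        ≤ ((B - R * A)ᵀ * (B - R * A)).trace := by
  intro R hR
  have hUU : U * Uᵀ = 1 := mul_eq_one_comm.mp hU
  have hVV : V * Vᵀ = 1 := mul_eq_one_comm.mp hV
  -- cost expansion for any orthogonal S
  have cost : ∀ S : Matrix (Fin N) (Fin N) ℝ, Sᵀ * S = 1 →
      ((B - S * A)ᵀ * (B - S * A)).trace
        = (Bᵀ * B).trace + (Aᵀ * A).trace - 2 * (Bᵀ * (S * A)).trace := by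
    intro S hS
    have hexp : (B - S * A)ᵀ * (B - S * A)
        = Bᵀ * B - Bᵀ * (S * A) - Aᵀ * Sᵀ * B + Aᵀ * (Sᵀ * S) * A := by
      simp only [Matrix.transpose_sub, Matrix.transpose_mul, Matrix.sub_mul,
        Matrix.mul_sub, Matrix.mul_assoc]
      abel
    have htr : (Aᵀ * Sᵀ * B).trace = (Bᵀ * (S * A)).trace := by
      rw [← Matrix.trace_transpose (Aᵀ * Sᵀ * B)]
      congr 1
      simp [Matrix.transpose_mul, Matrix.mul_assoc]
    rw [hexp]
    simp only [Matrix.trace_add, Matrix.trace_sub, hS, Matrix.mul_one, htr]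
    ring
  have hR0 : (U * Vᵀ)ᵀ * (U * Vᵀ) = 1 := by
    calc (U * Vᵀ)ᵀ * (U * Vᵀ) = V * ((Uᵀ * U) * Vᵀ) := by
          simp [Matrix.transpose_mul, Matrix.mul_assoc]
      _ = 1 := by rw [hU, Matrix.one_mul, hVV]
  rw [cost R hR, cost (U * Vᵀ) hR0]
  -- reduces to maximizing tr(Bᵀ S A)
  have key : ∀ S : Matrix (Fin N) (Fin N) ℝ,
      (Bᵀ * (S * A)).trace = ∑ i, σ i * (Uᵀ * S * V) i i := by
    intro S
    have h1 : (Bᵀ * (S * A)).trace = (S * (A * Bᵀ)).trace := by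
      rw [Matrix.trace_mul_comm, Matrix.mul_assoc]
    have h2 : A * Bᵀ = V * Matrix.diagonal σ * Uᵀ := by
      have := congrArg Matrix.transpose hsvd
      simpa [Matrix.transpose_mul, Matrix.mul_assoc, Matrix.diagonal_transpose] using this
    rw [h1, h2]
    have h3 : (S * (V * Matrix.diagonal σ * Uᵀ)).trace
        = (Matrix.diagonal σ * (Uᵀ * S * V)).trace := by
      rw [show S * (V * Matrix.diagonal σ * Uᵀ) = (S * V * Matrix.diagonal σ) * Uᵀ by
            simp [Matrix.mul_assoc],
          Matrix.trace_mul_comm,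
          show Uᵀ * (S * V * Matrix.diagonal σ) = (Uᵀ * S * V) * Matrix.diagonal σ by
            simp [Matrix.mul_assoc],
          Matrix.trace_mul_comm]
    rw [h3, trace_diag_mul]
  rw [key R, key (U * Vᵀ)]
  have hident : Uᵀ * (U * Vᵀ) * V = 1 := by
    calc Uᵀ * (U * Vᵀ) * V = (Uᵀ * U) * (Vᵀ * V) := by
          simp [Matrix.mul_assoc]
      _ = 1 := by rw [hU, hV, Matrix.one_mul]
  have horth : (Uᵀ * R * V)ᵀ * (Uᵀ * R * V) = 1 := by
    calc (Uᵀ * R * V)ᵀ * (Uᵀ * R * V)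
        = Vᵀ * (Rᵀ * ((U * Uᵀ) * (R * V))) := by
          simp [Matrix.transpose_mul, Matrix.mul_assoc]
      _ = Vᵀ * (Rᵀ * R * V) := by rw [hUU, Matrix.one_mul, Matrix.mul_assoc]
      _ = 1 := by rw [hR, Matrix.one_mul, hV]
  have hsum : ∑ i, σ i * (Uᵀ * R * V) i i ≤ ∑ i, σ i * (Uᵀ * (U * Vᵀ) * V) i i := by
    apply Finset.sum_le_sum
    intro i _
    rw [hident]
    simp only [Matrix.one_apply_eq]
    have := diag_le_one_of_orth _ horth i
    nlinarith [hσ i]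
  linarith
end

section
/- Let q be a unit biquaternion (q q* = 1) and let v = (t, ix, iy, iz) be a minquat with t, x, y, z ∈ ℝ. Then w = q v (q*)‾, where (q*)‾ denotes componentwise complex conjugation of the quaternion conjugate q*, is again a minquat, and it has the same biquaternion norm: w w* = v v*. In particular, the map v ↦ q v (q*)‾ preserves the Minkowski quadratic form t² − x² − y² − z². -/
/-!
Componentwise conjugation is a ring automorphism of `ℍ[ℂ]` commuting with `star`, and the
minquats are exactly the biquaternions `v` with `v‾ = v*`. Hence for `w = q v (q*)‾` we get
`w‾ = q‾ v* q* = w*`, so `w` is a minquat; and `w w* = q v (q* q)‾ v* q* = q (v v*) q* = v v*`,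
because `v v*` is a scalar.
-/

open Quaternion

/-- The minquat `(t, ix, iy, iz)` encoding the 4-vector `(t, x, y, z)`. -/
def minquat (t x y z : ℝ) : ℍ[ℂ] :=
  ⟨(t : ℂ), Complex.I * (x : ℂ), Complex.I * (y : ℂ), Complex.I * (z : ℂ)⟩

/-- Componentwise complex conjugation of a biquaternion. -/
def biquatBar (q : ℍ[ℂ]) : ℍ[ℂ] :=
  ⟨(starRingEnd ℂ) q.re, (starRingEnd ℂ) q.imI, (starRingEnd ℂ) q.imJ, (starRingEnd ℂ) q.imK⟩

section Projections

variable (q : ℍ[ℂ]) (t x y z : ℝ)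

@[simp] lemma biquatBar_re : (biquatBar q).re = starRingEnd ℂ q.re := rfl
@[simp] lemma biquatBar_imI : (biquatBar q).imI = starRingEnd ℂ q.imI := rfl
@[simp] lemma biquatBar_imJ : (biquatBar q).imJ = starRingEnd ℂ q.imJ := rfl
@[simp] lemma biquatBar_imK : (biquatBar q).imK = starRingEnd ℂ q.imK := rfl

@[simp] lemma minquat_re : (minquat t x y z).re = t := rfl
@[simp] lemma minquat_imI : (minquat t x y z).imI = Complex.I * x := rfl
@[simp] lemma minquat_imJ : (minquat t x y z).imJ = Complex.I * y := rfl
@[simp] lemma minquat_imK : (minquat t x y z).imK = Complex.I * z := rfl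

end Projections

@[simp]
lemma biquatBar_mul (a b : ℍ[ℂ]) : biquatBar (a * b) = biquatBar a * biquatBar b := by
  ext <;> simp

@[simp]
lemma biquatBar_star (a : ℍ[ℂ]) : biquatBar (star a) = star (biquatBar a) := by
  ext <;> simp

@[simp]
lemma biquatBar_biquatBar (a : ℍ[ℂ]) : biquatBar (biquatBar a) = a := by
  ext <;> simp

@[simp]
lemma biquatBar_one : biquatBar 1 = 1 := by
  ext <;> simp

lemma biquatBar_eq_star_iff_exists_minquat (v : ℍ[ℂ]) :
    biquatBar v = star v ↔ ∃ t x y z : ℝ, v = minquat t x y z := by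
  constructor
  · intro h
    have h₀ := congrArg QuaternionAlgebra.re h
    have h₁ := congrArg QuaternionAlgebra.imI h
    have h₂ := congrArg QuaternionAlgebra.imJ h
    have h₃ := congrArg QuaternionAlgebra.imK h
    simp only [biquatBar_re, biquatBar_imI, biquatBar_imJ, biquatBar_imK, re_star, imI_star,
      imJ_star, imK_star, Complex.ext_iff, Complex.conj_re, Complex.conj_im, Complex.neg_re,
      Complex.neg_im] at h₀ h₁ h₂ h₃
    refine ⟨v.re.re, v.imI.im, v.imJ.im, v.imK.im, ?_⟩
    ext <;> simp [Complex.ext_iff] <;> linarith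
  · rintro ⟨t, x, y, z, rfl⟩
    ext <;> simp

lemma biquatBar_conj_eq_star (q : ℍ[ℂ]) {v : ℍ[ℂ]} (hv : biquatBar v = star v) :
    biquatBar (q * v * biquatBar (star q)) = star (q * v * biquatBar (star q)) := by
  simp [hv, mul_assoc]

lemma conj_mul_star_conj {q : ℍ[ℂ]} (hq : q * star q = 1) (v : ℍ[ℂ]) :
    q * v * biquatBar (star q) * star (q * v * biquatBar (star q)) = v * star v := by
  have hbar : biquatBar (star q) * biquatBar q = 1 := by
    rw [← biquatBar_mul, star_comm_self', hq, biquatBar_one]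
  calc q * v * biquatBar (star q) * star (q * v * biquatBar (star q))
      = q * v * (biquatBar (star q) * biquatBar q) * star v * star q := by
        simp only [star_mul, biquatBar_star, star_star]; noncomm_ring
    _ = q * (v * star v) * star q := by rw [hbar]; noncomm_ring
    _ = v * star v := by
        rw [Quaternion.mul_star_eq_coe v, ← Quaternion.coe_commutes, mul_assoc, hq, mul_one]

/-- If `q` is a unit biquaternion and `v = (t, ix, iy, iz)` is a minquat, then
`w = q v (q*)‾` is again a minquat with the same biquaternion norm; in particular the map
`v ↦ q v (q*)‾` preserves the Minkowski quadratic form `t² − x² − y² − z²`. -/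
theorem unit_biquaternion_action_on_minquats (q : ℍ[ℂ]) (hq : q * star q = 1)
    (t x y z : ℝ) :
    (∃ t' x' y' z' : ℝ, q * minquat t x y z * biquatBar (star q) = minquat t' x' y' z') ∧
    (q * minquat t x y z * biquatBar (star q)) *
        star (q * minquat t x y z * biquatBar (star q))
      = minquat t x y z * star (minquat t x y z) := by
  have hv : biquatBar (minquat t x y z) = star (minquat t x y z) :=
    (biquatBar_eq_star_iff_exists_minquat _).2 ⟨t, x, y, z, rfl⟩
  exact ⟨(biquatBar_eq_star_iff_exists_minquat _).1 (biquatBar_conj_eq_star q hv),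
    conj_mul_star_conj hq _⟩
end

section
/- (Haber's explicit Lorentz matrix exponential) Let ζ, θ ∈ ℝ³, let A = A(ζ, θ) be the corresponding Lorentz algebra element, and let a, b ≥ 0 be defined by a² = ½[|θ|² − |ζ|² + √((|θ|² − |ζ|²)² + 4(θ·ζ)²)] and b² = ½[|ζ|² − |θ|² + √((|θ|² − |ζ|²)² + 4(θ·ζ)²)]. Assume a > 0 and b > 0 (equivalently θ·ζ ≠ 0). Then the matrix exponential of A is given by exp(A) = (1/(a² + b²)) · [f₀·I + f₁·A + f₂·A² + f₃·A³], where f₀ = b²·cos a + a²·cosh b, f₁ = (b²/a)·sin a + (a²/b)·sinh b, f₂ = cosh b − cos a, and f₃ = (sinh b)/b − (sin a)/a. -/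
open Matrix

/-- The Lorentz algebra element with boost vector `ζ` and rotation vector `θ`. -/
def lorentzAlg (ζ θ : Fin 3 → ℝ) : Matrix (Fin 4) (Fin 4) ℝ :=
  !![0,   ζ 0,  ζ 1,  ζ 2;
     ζ 0, 0,    -θ 2, θ 1;
     ζ 1, θ 2,  0,    -θ 0;
     ζ 2, -θ 1, θ 0,  0]

/-!
Since `a²` and `-b²` are the roots of `t² - (|θ|² - |ζ|²) t - (θ·ζ)²`, the matrix `A` satisfies
`A⁴ = (b² - a²) A² + a² b²`. Hence `p = A² + a²` and `q = b² - A²` satisfy `A² p = b² p`,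
`A² q = -a² q` and `p + q = a² + b²`: multiplied by `p` the exponential series of `A` collapses
to the series of `cosh b` and `sinh b / b`, multiplied by `q` to those of `cos a` and `sin a / a`.
-/

open NormedSpace
open scoped Nat

theorem Real.hasSum_cosh_sq (r : ℝ) :
    HasSum (fun k : ℕ => (r ^ 2) ^ k / (2 * k)!) (Real.cosh r) := by
  simpa only [← pow_mul] using Real.hasSum_cosh r

theorem Real.hasSum_sinh_div_sq {r : ℝ} (hr : r ≠ 0) :
    HasSum (fun k : ℕ => (r ^ 2) ^ k / (2 * k + 1)!) (Real.sinh r / r) := by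
  refine ((Real.hasSum_sinh r).div_const r).congr_fun fun k => ?_
  rw [pow_succ r (2 * k), pow_mul]
  field_simp

theorem Real.hasSum_cos_neg_sq (r : ℝ) :
    HasSum (fun k : ℕ => (-r ^ 2) ^ k / (2 * k)!) (Real.cos r) := by
  simpa only [neg_pow (r ^ 2), ← pow_mul] using Real.hasSum_cos r

theorem Real.hasSum_sin_div_neg_sq {r : ℝ} (hr : r ≠ 0) :
    HasSum (fun k : ℕ => (-r ^ 2) ^ k / (2 * k + 1)!) (Real.sin r / r) := by
  refine ((Real.hasSum_sin r).div_const r).congr_fun fun k => ?_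
  rw [neg_pow, pow_succ r (2 * k), pow_mul]
  field_simp

section Algebra

variable {R 𝔸 : Type*} [CommSemiring R] [Semiring 𝔸] [Algebra R 𝔸]

theorem pow_mul_eq_pow_smul_of_mul_eq_smul {y p : 𝔸} {c : R} (h : y * p = c • p) (k : ℕ) :
    y ^ k * p = c ^ k • p := by
  induction k with
  | zero => simp
  | succ k ih => rw [pow_succ, mul_assoc, h, mul_smul_comm, ih, smul_smul, pow_succ']

end Algebra

section TopologicalAlgebra

variable {𝔸 : Type*} [Ring 𝔸] [Algebra ℝ 𝔸] [TopologicalSpace 𝔸] [IsTopologicalRing 𝔸]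
  [ContinuousSMul ℝ 𝔸]

theorem hasSum_exp_series_mul_of_sq_mul_eq_smul {x p : 𝔸} {c C S : ℝ} (hx : x ^ 2 * p = c • p)
    (hC : HasSum (fun k : ℕ => c ^ k / (2 * k)!) C)
    (hS : HasSum (fun k : ℕ => c ^ k / (2 * k + 1)!) S) :
    HasSum (fun n => ((n ! : ℝ)⁻¹ • x ^ n) * p) (C • p + S • (x * p)) := by
  have heven (k : ℕ) : x ^ (2 * k) * p = c ^ k • p := by
    rw [pow_mul, pow_mul_eq_pow_smul_of_mul_eq_smul hx]
  refine HasSum.even_add_odd ?_ ?_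
  · convert hC.smul_const p using 2 with k
    rw [smul_mul_assoc, heven, smul_smul, inv_mul_eq_div]
  · convert hS.smul_const (x * p) using 2 with k
    rw [smul_mul_assoc, pow_succ', mul_assoc, heven, mul_smul_comm, smul_smul, inv_mul_eq_div]

variable [T2Space 𝔸]

theorem exp_eq_of_pow_four_eq {x : 𝔸} {a b : ℝ} (ha : a ≠ 0) (hb : b ≠ 0)
    (hx : x ^ 4 = (b ^ 2 - a ^ 2) • x ^ 2 + (a ^ 2 * b ^ 2) • (1 : 𝔸)) :
    exp x = (1 / (a ^ 2 + b ^ 2)) •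
      ((b ^ 2 * Real.cos a + a ^ 2 * Real.cosh b) • (1 : 𝔸)
        + (b ^ 2 / a * Real.sin a + a ^ 2 / b * Real.sinh b) • x
        + (Real.cosh b - Real.cos a) • x ^ 2
        + (Real.sinh b / b - Real.sin a / a) • x ^ 3) := by
  set p := x ^ 2 + a ^ 2 • (1 : 𝔸)
  set q := b ^ 2 • (1 : 𝔸) - x ^ 2
  have hs : a ^ 2 + b ^ 2 ≠ 0 := by positivity
  have hx4 : x ^ 2 * x ^ 2 = x ^ 4 := by rw [← pow_add]
  have hp : x ^ 2 * p = b ^ 2 • p := by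
    simp only [p, mul_add, mul_smul_comm, mul_one, hx4, hx]
    module
  have hq : x ^ 2 * q = (-a ^ 2) • q := by
    simp only [q, mul_sub, mul_smul_comm, mul_one, hx4, hx]
    module
  have hpq : p + q = (a ^ 2 + b ^ 2) • (1 : 𝔸) := by
    simp only [p, q]
    module
  have hsum : HasSum (fun n => (n ! : ℝ)⁻¹ • x ^ n) ((a ^ 2 + b ^ 2)⁻¹ •
      ((Real.cosh b • p + (Real.sinh b / b) • (x * p))
        + (Real.cos a • q + (Real.sin a / a) • (x * q)))) := by
    convert ((hasSum_exp_series_mul_of_sq_mul_eq_smul hp (Real.hasSum_cosh_sq b)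
      (Real.hasSum_sinh_div_sq hb)).add (hasSum_exp_series_mul_of_sq_mul_eq_smul hq
      (Real.hasSum_cos_neg_sq a) (Real.hasSum_sin_div_neg_sq ha))).const_smul
      (a ^ 2 + b ^ 2)⁻¹ using 1
    funext n
    rw [← mul_add, hpq, mul_smul_comm, mul_one, inv_smul_smul₀ hs]
  rw [congrFun (exp_eq_tsum ℝ) x, hsum.tsum_eq]
  simp only [p, q, mul_add, mul_sub, mul_smul_comm, mul_one, ← pow_succ']
  match_scalars <;> field_simp <;> ring

end TopologicalAlgebra

theorem lorentzAlg_pow_four (ζ θ : Fin 3 → ℝ) :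
    lorentzAlg ζ θ ^ 4 = (ζ ⬝ᵥ ζ - θ ⬝ᵥ θ) • lorentzAlg ζ θ ^ 2
      + ((θ ⬝ᵥ ζ) ^ 2) • (1 : Matrix (Fin 4) (Fin 4) ℝ) := by
  rw [show lorentzAlg ζ θ ^ 4 = lorentzAlg ζ θ ^ 2 * lorentzAlg ζ θ ^ 2 by rw [← pow_add], sq]
  ext i j
  fin_cases i <;> fin_cases j <;>
    simp [lorentzAlg, mul_apply, Fin.sum_univ_four, dotProduct, Fin.sum_univ_three, one_apply] <;> ring

/-- (Haber's explicit Lorentz matrix exponential) With `a, b > 0` defined by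
`a² = ½[|θ|² − |ζ|² + √((|θ|² − |ζ|²)² + 4(θ·ζ)²)]` and
`b² = ½[|ζ|² − |θ|² + √((|θ|² − |ζ|²)² + 4(θ·ζ)²)]`, the matrix exponential of
`A = A(ζ, θ)` is `exp A = (f₀ I + f₁ A + f₂ A² + f₃ A³)/(a² + b²)` where
`f₀ = b² cos a + a² cosh b`, `f₁ = (b²/a) sin a + (a²/b) sinh b`,
`f₂ = cosh b − cos a`, `f₃ = sinh b / b − sin a / a`. -/
theorem haber_lorentz_exponential (ζ θ : Fin 3 → ℝ) (a b : ℝ)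
    (ha : 0 < a) (hb : 0 < b)
    (ha2 : a ^ 2 = (θ ⬝ᵥ θ - ζ ⬝ᵥ ζ
      + Real.sqrt ((θ ⬝ᵥ θ - ζ ⬝ᵥ ζ) ^ 2 + 4 * (θ ⬝ᵥ ζ) ^ 2)) / 2)
    (hb2 : b ^ 2 = (ζ ⬝ᵥ ζ - θ ⬝ᵥ θ
      + Real.sqrt ((θ ⬝ᵥ θ - ζ ⬝ᵥ ζ) ^ 2 + 4 * (θ ⬝ᵥ ζ) ^ 2)) / 2) :
    NormedSpace.exp (lorentzAlg ζ θ)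
      = (1 / (a ^ 2 + b ^ 2)) •
          ((b ^ 2 * Real.cos a + a ^ 2 * Real.cosh b) • (1 : Matrix (Fin 4) (Fin 4) ℝ)
            + (b ^ 2 / a * Real.sin a + a ^ 2 / b * Real.sinh b) • lorentzAlg ζ θ
            + (Real.cosh b - Real.cos a) • (lorentzAlg ζ θ) ^ 2
            + (Real.sinh b / b - Real.sin a / a) • (lorentzAlg ζ θ) ^ 3) := by
  have hdiff : ζ ⬝ᵥ ζ - θ ⬝ᵥ θ = b ^ 2 - a ^ 2 := by
    rw [ha2, hb2]
    ring
  have hprod : (θ ⬝ᵥ ζ) ^ 2 = a ^ 2 * b ^ 2 := by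
    have hD := Real.sq_sqrt (by positivity : 0 ≤ (θ ⬝ᵥ θ - ζ ⬝ᵥ ζ) ^ 2 + 4 * (θ ⬝ᵥ ζ) ^ 2)
    rw [ha2, hb2]
    linear_combination (-1 / 4 : ℝ) * hD
  apply exp_eq_of_pow_four_eq ha.ne' hb.ne'
  rw [lorentzAlg_pow_four, hdiff, hprod]
end

section
/- For every element A of the Lorentz Lie algebra so(3,1) (i.e. every real 4×4 matrix A with Aᵀη = −ηA), the matrix exponential exp(A) is orthochronous: its top-left (time-time) entry satisfies (exp A)₀₀ ≥ 1. Hence the matrix exponential of so(3,1) lands in the proper orthochronous Lorentz group SO(3,1)₊. -/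
/-!
Write `exp A = C * C` with `C = exp (A / 2)`, which is again a Lorentz transformation. For a
Lorentz matrix `C`, with `r` and `c` the spatial parts of its first row and column, both
`C₀₀² = 1 + |r|²` and `C₀₀² = 1 + |c|²` hold, so `(C * C)₀₀ = C₀₀² + r · c = 1 + |r + c|² / 2 ≥ 1`.
The determinant of `C * C` is `(det C)² = 1`.
-/

open Matrix

/-- The Minkowski metric `η = diag(−1, 1, 1, 1)` on `ℝ⁴`. -/
def minkowskiEta : Matrix (Fin 4) (Fin 4) ℝ := Matrix.diagonal ![-1, 1, 1, 1]

open NormedSpace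

namespace Matrix

variable {n R : Type*} [Fintype n] [DecidableEq n]

open scoped Norms.Operator in
theorem exp_transpose_mul_mul_exp_of_transpose_mul_eq_neg {𝕂 : Type*} [RCLike 𝕂]
    {η A : Matrix n n 𝕂} (h : Aᵀ * η = -(η * A)) : (exp A)ᵀ * η * exp A = η := by
  have hsemi : SemiconjBy η A (-Aᵀ) := by
    rw [SemiconjBy, neg_mul, h, neg_neg]
  rw [← exp_transpose, ← neg_neg Aᵀ]
  exact hsemi.exp_neg_mul_mul_exp_eq_self

theorem sq_det_eq_one_of_transpose_mul_mul_eq [CommRing R] [IsDomain R] {η Λ : Matrix n n R}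
    (hη : η.det ≠ 0) (h : Λᵀ * η * Λ = η) : Λ.det ^ 2 = 1 := by
  have hdet := congrArg det h
  rw [det_mul, det_mul, det_transpose] at hdet
  exact mul_right_cancel₀ hη (by linear_combination hdet)

theorem mul_mul_transpose_eq_of_transpose_mul_mul_eq [CommRing R] {η Λ : Matrix n n R}
    (hη : η * η = 1) (h : Λᵀ * η * Λ = η) : Λ * η * Λᵀ = η := by
  have hleft : (η * Λᵀ * η) * Λ = 1 := by
    rw [mul_assoc, mul_assoc, ← mul_assoc Λᵀ, h, hη]
  have hright : Λ * (η * Λᵀ * η) = 1 := mul_eq_one_comm.mp hleft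
  calc Λ * η * Λᵀ = Λ * (η * Λᵀ * η) * η := by simp only [mul_assoc, hη, mul_one]
    _ = η := by rw [hright, one_mul]

end Matrix

theorem minkowskiEta_mul_self : minkowskiEta * minkowskiEta = 1 := by
  simp [minkowskiEta, diagonal_mul_diagonal, ← diagonal_one, Fin.forall_fin_succ]

theorem det_minkowskiEta : minkowskiEta.det = -1 := by
  simp [minkowskiEta, det_diagonal, Fin.prod_univ_four]

theorem sq_apply_zero_zero_of_lorentz {Λ : Matrix (Fin 4) (Fin 4) ℝ}
    (h : Λᵀ * minkowskiEta * Λ = minkowskiEta) :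
    Λ 0 0 ^ 2 = 1 + (Λ 1 0 ^ 2 + Λ 2 0 ^ 2 + Λ 3 0 ^ 2) := by
  have h00 := congrFun (congrFun h 0) 0
  simp only [minkowskiEta, diagonal, mul_apply, transpose_apply, of_apply, mul_ite, mul_zero,
    Finset.sum_ite_eq', Finset.mem_univ, ↓reduceIte, Fin.sum_univ_four, cons_val_zero, mul_neg,
    mul_one, neg_mul, cons_val_one, cons_val] at h00
  linear_combination -h00

theorem one_le_mul_self_apply_zero_zero_of_lorentz {Λ : Matrix (Fin 4) (Fin 4) ℝ}
    (h : Λᵀ * minkowskiEta * Λ = minkowskiEta) : 1 ≤ (Λ * Λ) 0 0 := by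
  have hcol := sq_apply_zero_zero_of_lorentz h
  have hrow : Λ 0 0 ^ 2 = 1 + (Λ 0 1 ^ 2 + Λ 0 2 ^ 2 + Λ 0 3 ^ 2) := by
    simpa using sq_apply_zero_zero_of_lorentz (Λ := Λᵀ) (by
      simpa using mul_mul_transpose_eq_of_transpose_mul_mul_eq minkowskiEta_mul_self h)
  rw [mul_apply, Fin.sum_univ_four]
  nlinarith [sq_nonneg (Λ 0 1 + Λ 1 0), sq_nonneg (Λ 0 2 + Λ 2 0), sq_nonneg (Λ 0 3 + Λ 3 0)]

/-- For every `A ∈ so(3,1)` (i.e. `Aᵀ η = −η A`), the matrix exponential `exp A` is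
orthochronous: `(exp A)₀₀ ≥ 1`. Hence `exp` lands in the proper orthochronous Lorentz
group `SO(3,1)₊`: `exp A` preserves `η`, has determinant `1`, and is orthochronous. -/
theorem exp_lorentz_algebra_orthochronous (A : Matrix (Fin 4) (Fin 4) ℝ)
    (hA : Aᵀ * minkowskiEta = -(minkowskiEta * A)) :
    1 ≤ NormedSpace.exp A 0 0 ∧
    (NormedSpace.exp A)ᵀ * minkowskiEta * NormedSpace.exp A = minkowskiEta ∧
    (NormedSpace.exp A).det = 1 := by
  set C := exp ((2 : ℝ)⁻¹ • A)
  have hC : Cᵀ * minkowskiEta * C = minkowskiEta :=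
    exp_transpose_mul_mul_exp_of_transpose_mul_eq_neg (by
      rw [transpose_smul, smul_mul, hA, mul_smul_comm, smul_neg])
  have hsq : exp A = C * C := by
    rw [← exp_add_of_commute _ _ (Commute.refl _), ← add_smul]
    norm_num
  refine ⟨hsq ▸ one_le_mul_self_apply_zero_zero_of_lorentz hC,
    exp_transpose_mul_mul_exp_of_transpose_mul_eq_neg hA, ?_⟩
  rw [hsq, det_mul, ← sq]
  exact sq_det_eq_one_of_transpose_mul_mul_eq (by rw [det_minkowskiEta]; norm_num) hC
end
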